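/- arXiv:math/0105098 — 3 statements merged into one kernel-verified Lean document; each statement's English description precedes it below -/
import Mathlib

section
/- For every real φ with 0 < φ < 2π, the series ∑_{k=1}^∞ sin(kφ)/k converges and its sum equals (π − φ)/2. -/
open Filter Finset Complex Topology
open scoped Real

/-!
Put `z = exp (φ i)`, so that `sin (k φ) / k` is the imaginary part of `z ^ k / k`. Since `‖z‖ = 1`
and `z ≠ 1`, the partial geometric sums of `z` are bounded, and Dirichlet's test shows that
`∑ z ^ k / k` converges. By Abel's limit theorem its sum is the radial limit of
`∑ (x z) ^ k / k = -log (1 - x z)` as `x → 1⁻`, i.e. `-log (1 - z)`. Finally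
`1 - z = 2 sin (φ / 2) exp ((φ - π) / 2 · i)` with `sin (φ / 2) > 0`, so the imaginary part of
`-log (1 - z)` is `(π - φ) / 2`.
-/

lemma norm_geom_sum_le_of_norm_le_one {𝕜 : Type*} [NormedDivisionRing 𝕜] {z : 𝕜}
    (hz : ‖z‖ ≤ 1) (hz1 : z ≠ 1) (n : ℕ) :
    ‖∑ i ∈ range n, z ^ i‖ ≤ 2 / ‖z - 1‖ := by
  rw [geom_sum_eq hz1, norm_div]
  gcongr
  calc ‖z ^ n - 1‖ ≤ ‖z‖ ^ n + ‖(1 : 𝕜)‖ := by rw [← norm_pow]; exact norm_sub_le _ _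
    _ ≤ 2 := by rw [norm_one]; linarith [pow_le_one₀ (norm_nonneg z) hz (n := n)]

lemma cauchySeq_sum_range_pow_div_of_norm_le_one {𝕜 : Type*} [RCLike 𝕜] {z : 𝕜}
    (hz : ‖z‖ ≤ 1) (hz1 : z ≠ 1) :
    CauchySeq fun n ↦ ∑ i ∈ range n, z ^ i / i := by
  have hanti : Antitone fun n : ℕ ↦ 1 / ((n : ℝ) + 1) := fun a b hab ↦ by
    dsimp only; gcongr
  have hdir := hanti.cauchySeq_series_mul_of_tendsto_zero_of_bounded
    tendsto_one_div_add_atTop_nhds_zero_nat (norm_geom_sum_le_of_norm_le_one hz hz1)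
  -- Dirichlet's test gives the series of `z ^ i / (i + 1)`; multiply by `z` and shift the index.
  rw [← cauchySeq_shift 1]
  convert (uniformContinuous_mul_left' z).comp_cauchySeq hdir using 1
  ext n
  simp only [Function.comp_apply, mul_sum, sum_range_succ', Nat.cast_zero, div_zero, add_zero]
  refine sum_congr rfl fun i _ ↦ ?_
  rw [RCLike.real_smul_eq_coe_mul]
  push_cast
  ring

lemma one_sub_mem_slitPlane_of_norm_le_one {z : ℂ} (hz : ‖z‖ ≤ 1) (hz1 : z ≠ 1) :
    1 - z ∈ slitPlane := by
  by_cases him : z.im = 0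
  · left
    have hre : z.re < 1 := by
      refine lt_of_le_of_ne ((le_abs_self _).trans (abs_re_le_norm z) |>.trans hz) fun h ↦ hz1 ?_
      exact Complex.ext (by simpa using h) (by simpa using him)
    simpa using hre
  · right
    simpa using him

lemma tendsto_sum_range_pow_div_neg_log {z : ℂ} (hz : ‖z‖ ≤ 1) (hz1 : z ≠ 1) :
    Tendsto (fun n ↦ ∑ i ∈ range n, z ^ i / i) atTop (𝓝 (-log (1 - z))) := by
  obtain ⟨l, hl⟩ :=
    cauchySeq_tendsto_of_complete (cauchySeq_sum_range_pow_div_of_norm_le_one hz hz1)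
  suffices l = -log (1 - z) by rwa [← this]
  have hlog : Tendsto (fun w ↦ -log (1 - w * z)) ((𝓝[<] 1).map ofReal) (𝓝 (-log (1 - z))) := by
    have hcont : ContinuousAt (fun w : ℂ ↦ -log (1 - w * z)) 1 := by
      refine (continuousAt_clog ?_).comp (by fun_prop) |>.neg
      simpa using one_sub_mem_slitPlane_of_norm_le_one hz hz1
    rw [tendsto_map'_iff]
    simpa using (hcont.comp_of_eq continuous_ofReal.continuousAt ofReal_one).tendsto.mono_left
      nhdsWithin_le_nhds
  have hseries : (fun w ↦ ∑' n : ℕ, z ^ n / n * w ^ n) =ᶠ[(𝓝[<] 1).map ofReal]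
      fun w ↦ -log (1 - w * z) := by
    rw [EventuallyEq, eventually_map]
    filter_upwards [Ioo_mem_nhdsLT (neg_lt_self one_pos)] with x hx
    have hxz : ‖(x : ℂ) * z‖ < 1 := by
      rw [norm_mul, norm_real, Real.norm_eq_abs]
      calc |x| * ‖z‖ ≤ |x| := mul_le_of_le_one_right (abs_nonneg x) hz
        _ < 1 := abs_lt.2 hx
    rw [← (hasSum_taylorSeries_neg_log hxz).tsum_eq]
    exact tsum_congr fun n ↦ by rw [mul_pow]; ring
  exact tendsto_nhds_unique ((tendsto_tsum_powerSeries_nhdsWithin_lt hl).congr' hseries) hlog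

lemma one_sub_exp_ofReal_mul_I (φ : ℝ) :
    1 - exp (φ * I) = (2 * Real.sin (φ / 2) : ℝ) * exp (((φ - π) / 2 : ℝ) * I) := by
  set w := exp ((φ / 2 : ℝ) * I)
  have hw : w ≠ 0 := exp_ne_zero _
  have hsq : exp (φ * I) = w ^ 2 := by
    rw [← exp_nat_mul]; push_cast; ring_nf
  have hrot : exp (((φ - π) / 2 : ℝ) * I) = -I * w := by
    rw [show (((φ - π) / 2 : ℝ) : ℂ) * I = -π / 2 * I + (φ / 2 : ℝ) * I by push_cast; ring,
      exp_add, exp_neg_pi_div_two_mul_I]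
  have hsin : ((2 * Real.sin (φ / 2) : ℝ) : ℂ) = (w⁻¹ - w) * I := by
    rw [ofReal_mul, ofReal_ofNat, ofReal_sin, two_sin, neg_mul, exp_neg]
  rw [hsq, hrot, hsin]
  field_simp
  linear_combination (1 - w ^ 2) * I_sq

lemma arg_one_sub_exp_ofReal_mul_I {φ : ℝ} (h0 : 0 < φ) (h2 : φ < 2 * π) :
    arg (1 - exp (φ * I)) = (φ - π) / 2 := by
  have hsin : 0 < Real.sin (φ / 2) := Real.sin_pos_of_pos_of_lt_pi (by linarith) (by linarith)
  rw [one_sub_exp_ofReal_mul_I, arg_real_mul _ (by positivity), arg_exp_mul_I,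
    toIocMod_eq_self]
  constructor <;> linarith

lemma exp_ofReal_mul_I_ne_one {φ : ℝ} (h0 : 0 < φ) (h2 : φ < 2 * π) : exp (φ * I) ≠ 1 := by
  have hsin : 0 < Real.sin (φ / 2) := Real.sin_pos_of_pos_of_lt_pi (by linarith) (by linarith)
  rw [← sub_ne_zero, ← neg_sub, neg_ne_zero, one_sub_exp_ofReal_mul_I]
  exact mul_ne_zero (ofReal_ne_zero.2 (by positivity)) (exp_ne_zero _)

lemma im_sum_range_succ_exp_ofReal_mul_I_pow_div (φ : ℝ) (K : ℕ) :
    (∑ i ∈ range (K + 1), exp (φ * I) ^ i / i).im = ∑ k ∈ Icc 1 K, Real.sin (k * φ) / k := by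
  rw [im_sum, sum_range_eq_add_Ico _ K.add_one_pos, Ico_add_one_right_eq_Icc]
  simp only [Nat.cast_zero, div_zero, zero_im, zero_add, div_natCast_im, ← exp_nat_mul]
  refine sum_congr rfl fun k _ ↦ ?_
  rw [← exp_ofReal_mul_I_im (k * φ)]
  push_cast
  ring_nf

theorem statement5 (φ : ℝ) (h0 : 0 < φ) (h2 : φ < 2 * Real.pi) :
    Filter.Tendsto
      (fun K : ℕ => ∑ k ∈ Finset.Icc 1 K, Real.sin (k * φ) / k)
      Filter.atTop (nhds ((Real.pi - φ) / 2)) := by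
  have hlog := tendsto_sum_range_pow_div_neg_log (norm_exp_ofReal_mul_I φ).le
    (exp_ofReal_mul_I_ne_one h0 h2)
  have him := ((continuous_im.tendsto _).comp hlog).comp (tendsto_add_atTop_nat 1)
  rw [neg_im, log_im, arg_one_sub_exp_ofReal_mul_I h0 h2] at him
  rw [show (π - φ) / 2 = -((φ - π) / 2) by ring]
  exact him.congr (im_sum_range_succ_exp_ofReal_mul_I_pow_div φ)
end

section
/- Let R = ⨁_{d≥0} R_d be a commutative graded ring, j ≥ 1, and let x_1, …, x_j ∈ R be elements whose homogeneous components of degree 0 all vanish. Write y_i for the degree-1 homogeneous component of x_i. Then for every q, the degree-p homogeneous component of the elementary symmetric polynomial e_q(x_1, …, x_j) vanishes for all p < q, and its degree-q component equals e_q(y_1, …, y_j). -/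
/-!
If `a` has no homogeneous components below degree `m` and `b` none below degree `n`, then in the
expansion of `(a * b)_p` over `p = i + k` every term `a_i * b_k` with `p ≤ m + n` vanishes
unless `(i, k) = (m, n)`. Hence `a * b` has no components below degree `m + n` and
`(a * b)_{m+n} = a_m b_n`.
By induction, a product of `q` elements without degree-`0` part has no components below degree `q`,
and its degree-`q` part is the product of the degree-`1` parts; summing over `q`-subsets gives the
claim for `e_q`.
-/

open DirectSum Finset

section GradedProduct

variable {R σ : Type*} [CommSemiring R] [SetLike σ R] [AddSubmonoidClass σ R]
  (𝒜 : ℕ → σ) [GradedRing 𝒜]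

theorem coe_decompose_mul_eq_zero_of_lt_add {a b : R} {m n p : ℕ}
    (ha : ∀ i < m, (decompose 𝒜 a i : R) = 0) (hb : ∀ k < n, (decompose 𝒜 b k : R) = 0)
    (hp : p < m + n) : (decompose 𝒜 (a * b) p : R) = 0 := by
  rw [decompose_mul, coe_mul_apply_eq_sum_antidiagonal]
  refine sum_eq_zero fun ik hik => ?_
  rw [HasAntidiagonal.mem_antidiagonal] at hik
  rcases Nat.lt_or_ge ik.1 m with hi | hi
  · rw [ha _ hi, zero_mul]
  · rw [hb _ (by omega), mul_zero]

theorem coe_decompose_mul_add {a b : R} {m n : ℕ}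
    (ha : ∀ i < m, (decompose 𝒜 a i : R) = 0) (hb : ∀ k < n, (decompose 𝒜 b k : R) = 0) :
    (decompose 𝒜 (a * b) (m + n) : R) = decompose 𝒜 a m * decompose 𝒜 b n := by
  rw [decompose_mul, coe_mul_apply_eq_sum_antidiagonal]
  refine sum_eq_single_of_mem (m, n) (HasAntidiagonal.mem_antidiagonal.2 rfl) fun ik hik hne => ?_
  rw [HasAntidiagonal.mem_antidiagonal] at hik
  rcases Nat.lt_or_ge ik.1 m with hi | hi
  · rw [ha _ hi, zero_mul]
  · have hk : ik.2 < n := by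
      by_contra hk
      exact hne (Prod.ext (by omega) (by omega))
    rw [hb _ hk, mul_zero]

variable {ι : Type*} (x : ι → R) (d : ι → ℕ)

theorem coe_decompose_prod_eq_zero_of_lt_sum {s : Finset ι}
    (hx : ∀ i ∈ s, ∀ p < d i, (decompose 𝒜 (x i) p : R) = 0) :
    ∀ p < ∑ i ∈ s, d i, (decompose 𝒜 (∏ i ∈ s, x i) p : R) = 0 := by
  classical
  induction s using Finset.induction with
  | empty => simp
  | insert a s ha ih =>
    rw [prod_insert ha, sum_insert ha]
    exact fun p hp => coe_decompose_mul_eq_zero_of_lt_add 𝒜 (hx a (mem_insert_self a s))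
      (ih fun i hi => hx i (mem_insert_of_mem hi)) hp

theorem coe_decompose_prod_sum {s : Finset ι}
    (hx : ∀ i ∈ s, ∀ p < d i, (decompose 𝒜 (x i) p : R) = 0) :
    (decompose 𝒜 (∏ i ∈ s, x i) (∑ i ∈ s, d i) : R) =
      ∏ i ∈ s, (decompose 𝒜 (x i) (d i) : R) := by
  classical
  induction s using Finset.induction with
  | empty => simpa using decompose_of_mem_same 𝒜 SetLike.GradedOne.one_mem
  | insert a s ha ih =>
    have hs : ∀ i ∈ s, ∀ p < d i, (decompose 𝒜 (x i) p : R) = 0 :=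
      fun i hi => hx i (mem_insert_of_mem hi)
    rw [prod_insert ha, sum_insert ha, prod_insert ha,
      coe_decompose_mul_add 𝒜 (hx a (mem_insert_self a s))
        (coe_decompose_prod_eq_zero_of_lt_sum 𝒜 x d hs), ih hs]

end GradedProduct

theorem statement10_general (R : Type*) [CommRing R] (𝒜 : ℕ → Submodule ℤ R) [GradedRing 𝒜]
    (j : ℕ) (x : Fin j → R)
    (hx0 : ∀ i, ((DirectSum.decompose 𝒜 (x i) 0 : 𝒜 0) : R) = 0)
    (q : ℕ) :
    (∀ p, p < q →
      ((DirectSum.decompose 𝒜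
          (∑ S ∈ Finset.powersetCard q (Finset.univ : Finset (Fin j)), ∏ i ∈ S, x i)
          p : 𝒜 p) : R) = 0) ∧
    ((DirectSum.decompose 𝒜
        (∑ S ∈ Finset.powersetCard q (Finset.univ : Finset (Fin j)), ∏ i ∈ S, x i)
        q : 𝒜 q) : R) =
      ∑ S ∈ Finset.powersetCard q (Finset.univ : Finset (Fin j)),
        ∏ i ∈ S, ((DirectSum.decompose 𝒜 (x i) 1 : 𝒜 1) : R) := by
  have hx (S : Finset (Fin j)) : ∀ i ∈ S, ∀ p < 1, (decompose 𝒜 (x i) p : R) = 0 :=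
    fun i _ p hp => Nat.lt_one_iff.1 hp ▸ hx0 i
  have hsum (n : ℕ) :
      (decompose 𝒜 (∑ S ∈ powersetCard q univ, ∏ i ∈ S, x i) n : R) =
        ∑ S ∈ powersetCard q univ, (decompose 𝒜 (∏ i ∈ S, x i) n : R) := by
    rw [decompose_sum, DFinsupp.finsetSum_apply, AddSubmonoidClass.coe_finsetSum]
  have hcard {S : Finset (Fin j)} (hS : S ∈ powersetCard q univ) : ∑ _ ∈ S, 1 = q := by
    rw [← card_eq_sum_ones, (mem_powersetCard.1 hS).2]
  refine ⟨fun p hp => ?_, ?_⟩ <;> rw [hsum]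
  · exact sum_eq_zero fun S hS =>
      coe_decompose_prod_eq_zero_of_lt_sum 𝒜 x _ (hx S) p (hcard hS ▸ hp)
  · exact sum_congr rfl fun S hS => hcard hS ▸ coe_decompose_prod_sum 𝒜 x _ (hx S)

theorem statement10 (R : Type*) [CommRing R] (𝒜 : ℕ → Submodule ℤ R) [GradedRing 𝒜]
    (j : ℕ) (hj : 1 ≤ j) (x : Fin j → R)
    (hx0 : ∀ i, ((DirectSum.decompose 𝒜 (x i) 0 : 𝒜 0) : R) = 0)
    (q : ℕ) :
    (∀ p, p < q →
      ((DirectSum.decompose 𝒜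
          (∑ S ∈ Finset.powersetCard q (Finset.univ : Finset (Fin j)), ∏ i ∈ S, x i)
          p : 𝒜 p) : R) = 0) ∧
    ((DirectSum.decompose 𝒜
        (∑ S ∈ Finset.powersetCard q (Finset.univ : Finset (Fin j)), ∏ i ∈ S, x i)
        q : 𝒜 q) : R) =
      ∑ S ∈ Finset.powersetCard q (Finset.univ : Finset (Fin j)),
        ∏ i ∈ S, ((DirectSum.decompose 𝒜 (x i) 1 : 𝒜 1) : R) :=
  statement10_general R 𝒜 j x hx0 q
end

section
/- Let V be a finite-dimensional vector space over a field K with dim V = n, and let A be an endomorphism of V. Then for every scalar c, det(A + c·id) = ∑_{q=0}^{n} c^{n−q} · tr(Λ^q A), where Λ^q A is the induced endomorphism of the q-th exterior power of V. -/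
/-! In a basis of `V`, `det (A + c • 1)` expands (via the characteristic polynomial of `-A`) so that
the coefficient of `c ^ (n - q)` is the sum of the principal `q × q` minors of the matrix of `A`.
In the induced basis `e_{i₁} ∧ ⋯ ∧ e_{i_q}` (`i₁ < ⋯ < i_q`) of `⋀^q V`, the diagonal entries
of `Λ^q A` are exactly these minors, so they sum to `tr (Λ^q A)`. -/

/-- The functorial endomorphism of the `q`-th exterior power `⋀[K]^q V` induced by
an endomorphism `A` of `V`: `ExteriorAlgebra.map A` preserves the submodule `⋀[K]^q V`. -/
theorem exteriorPower_map_mem {K V : Type*} [CommRing K] [AddCommGroup V] [Module K V]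
    (A : V →ₗ[K] V) (q : ℕ) : ∀ x ∈ ⋀[K]^q V, ExteriorAlgebra.map A x ∈ ⋀[K]^q V := by
  intro x hx
  have h1 : Submodule.map (ExteriorAlgebra.map A).toLinearMap (⋀[K]^q V) ≤ ⋀[K]^q V := by
    rw [Submodule.map_pow]
    have h2 : Submodule.map (ExteriorAlgebra.map A).toLinearMap
        (LinearMap.range (ExteriorAlgebra.ι K (M := V))) ≤
        LinearMap.range (ExteriorAlgebra.ι K (M := V)) := by
      rw [ExteriorAlgebra.ι_range_map_map]
      exact Submodule.map_le_iff_le_comap.mpr fun y _ => ⟨y, rfl⟩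
    exact pow_le_pow_left' h2 q
  exact h1 ⟨x, hx, rfl⟩

open Finset Module

theorem Matrix.det_add_smul_one_eq_sum_minors {R ι : Type*} [CommRing R] [Fintype ι]
    [DecidableEq ι] (M : Matrix ι ι R) (c : R) :
    (M + c • 1).det = ∑ q ∈ range (Fintype.card ι + 1), c ^ (Fintype.card ι - q) *
      ∑ s ∈ univ.powersetCard q, (M.submatrix (Subtype.val : s → ι) Subtype.val).det := by
  nontriviality R
  have hcharpoly : (M + c • 1).det = (-M).charpoly.eval c := by
    rw [Matrix.eval_charpoly, sub_neg_eq_add, add_comm, Matrix.smul_one_eq_diagonal]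
    rfl
  have hcoeff (q : ℕ) (hq : q ≤ Fintype.card ι) :
      (-M).charpoly.coeff (Fintype.card ι - q) =
        ∑ s ∈ univ.powersetCard q, (M.submatrix (Subtype.val : s → ι) Subtype.val).det := by
    rw [Matrix.charpoly_coeff_eq_sum_minors _ _ hq, mul_sum]
    refine sum_congr rfl fun s hs => ?_
    rw [Matrix.submatrix_neg, Pi.neg_apply, Pi.neg_apply, Matrix.det_neg, Fintype.card_coe,
      (mem_powersetCard.mp hs).2, ← mul_assoc, ← mul_pow, neg_one_mul, neg_neg, one_pow,
      one_mul]
  rw [hcharpoly, Polynomial.eval_eq_sum_range, Matrix.charpoly_natDegree_eq_dim,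
    ← sum_range_reflect]
  refine sum_congr rfl fun q hq => ?_
  rw [Nat.add_sub_cancel, hcoeff q (Nat.lt_succ_iff.mp (mem_range.mp hq)), mul_comm]

theorem exteriorPower.trace_map_eq_sum_minors {R M ι : Type*} [CommRing R] [AddCommGroup M]
    [Module R M] [Fintype ι] [LinearOrder ι] (b : Basis ι R M) (f : M →ₗ[R] M) (q : ℕ) :
    LinearMap.trace R _ (map q f) = ∑ s ∈ univ.powersetCard q,
      ((LinearMap.toMatrix b b f).submatrix (Subtype.val : s → ι) Subtype.val).det := by
  classical
  rw [LinearMap.trace_eq_matrix_trace R (b.exteriorPower q), Matrix.trace,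
    sum_subtype (p := (· ∈ Set.powersetCard ι q)) _ (by simp [Set.powersetCard.mem_iff])]
  refine Fintype.sum_congr _ _ fun s => ?_
  rw [Matrix.diag_apply, LinearMap.toMatrix_apply, basis_apply, map_apply_ιMulti_family,
    basis_repr_apply, ιMulti_family, ιMultiDual_apply_ιMulti,
    ← Matrix.det_submatrix_equiv_self (Set.powersetCard.orderIsoOfFin s).toEquiv,
    ← Matrix.det_transpose]
  congr 1
  ext i j
  simp only [Matrix.transpose_apply, Matrix.of_apply, Matrix.submatrix_apply,
    LinearMap.toMatrix_apply, Basis.coord_apply, Function.comp_apply]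
  rfl

theorem ExteriorAlgebra.map_restrict_exteriorPower {K V : Type*} [CommRing K] [AddCommGroup V]
    [Module K V] (A : V →ₗ[K] V) (q : ℕ) :
    (map A).toLinearMap.restrict (exteriorPower_map_mem A q) = exteriorPower.map q A := by
  refine exteriorPower.linearMap_ext (AlternatingMap.ext fun v => Subtype.ext ?_)
  simp only [LinearMap.compAlternatingMap_apply, exteriorPower.map_apply_ιMulti,
    exteriorPower.ιMulti_apply_coe]
  exact map_apply_ιMulti A v

/-- `det(A + c·id) = ∑_{q=0}^n c^{n-q} tr(Λ^q A)` for an endomorphism `A` of an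
`n`-dimensional vector space `V`. -/
theorem statement12 (K V : Type*) [Field K] [AddCommGroup V] [Module K V]
    [FiniteDimensional K V] (n : ℕ) (hn : Module.finrank K V = n)
    (A : V →ₗ[K] V) (c : K) :
    LinearMap.det (A + c • LinearMap.id) =
      ∑ q ∈ Finset.range (n + 1), c ^ (n - q) *
        LinearMap.trace K (⋀[K]^q V)
          ((ExteriorAlgebra.map A).toLinearMap.restrict (exteriorPower_map_mem A q)) := by
  let b : Basis (Fin n) K V := finBasisOfFinrankEq K V hn
  have hmatrix : LinearMap.toMatrix b b (A + c • LinearMap.id) =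
      LinearMap.toMatrix b b A + c • 1 := by
    rw [map_add, map_smul, LinearMap.toMatrix_id]
  simp only [ExteriorAlgebra.map_restrict_exteriorPower, exteriorPower.trace_map_eq_sum_minors b]
  rw [← LinearMap.det_toMatrix b, hmatrix, Matrix.det_add_smul_one_eq_sum_minors,
    Fintype.card_fin]
end
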